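/- arXiv:math/0111213 — 5 statements merged into one kernel-verified Lean document; each statement's English description precedes it below -/
import Mathlib

section
/- Let X be a metric space, V a real vector space of finite dimension r, and let ρ be a Glaeser operation on bundles of linear subspaces of V over X. Then for any bundle E, ρ^i(E) = ρ^{2r}(E) for all i ≥ 2r. -/
/-- A bundle of linear subspaces of `V` over `X`: each fibre is a linear subspace. -/
def IsBundle {X V : Type*} [AddCommGroup V] [Module ℝ V] (E : Set (X × V)) : Prop :=
  ∀ a : X, ∃ S : Submodule ℝ V, {v : V | (a, v) ∈ E} = (S : Set V)

/-- A Glaeser operation on bundles of linear subspaces of `V` over `X`: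
it maps bundles to bundles, contains the closure, and is local. -/
structure IsGlaeserOperation {X V : Type*} [MetricSpace X] [NormedAddCommGroup V]
    [NormedSpace ℝ V] (ρ : Set (X × V) → Set (X × V)) : Prop where
  bundle : ∀ E : Set (X × V), IsBundle E → IsBundle (ρ E)
  closure_subset : ∀ E : Set (X × V), IsBundle E → closure E ⊆ ρ E
  isLocal : ∀ E F : Set (X × V), IsBundle E → IsBundle F → ∀ U : Set X, IsOpen U →
    (∀ a ∈ U, {v : V | (a, v) ∈ E} = {v : V | (a, v) ∈ F}) →
    ∀ a ∈ U, {v : V | (a, v) ∈ ρ E} = {v : V | (a, v) ∈ ρ F}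

open Module Metric Set Function

/-! Let `C n` be the set of points where the fibres of `ρ^[n + 1] E` and `ρ^[n] E` differ. The
fibres only grow, so their dimension increases strictly on `C n`. Locality gives
`C (n + 1) ⊆ closure (C n)`, and a compactness argument shows that the fibre of `ρ F` at a limit of
points where `F` has fibres of dimension `≥ k` has dimension `≥ k` as well. Hence on `C (n + 2)`
the fibre dimension of `ρ^[n + 2] E` is at least its value for `ρ^[n + 1] E` on `C n`, and one more
strict increase shows that the fibre dimension of `ρ^[n + 1] E` on `C n` is at least `(n + 2) / 2`.
As it is at most `r`, the set `C (2 * r)` is empty, so `ρ^[2 * r] E` is a fixed point of `ρ`. -/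

theorem finrank_le_of_mem_closure {X V : Type*} [TopologicalSpace X] [NormedAddCommGroup V]
    [NormedSpace ℝ V] [FiniteDimensional ℝ V] {A : Set (X × V)} {T : Submodule ℝ V} {k : ℕ}
    {x : X}
    (hx : x ∈ closure {z | ∃ S : Submodule ℝ V, k ≤ finrank ℝ S ∧ (S : Set V) ⊆ Prod.mk z ⁻¹' A})
    (hT : Prod.mk x ⁻¹' closure A ⊆ T) : k ≤ finrank ℝ T := by
  -- Otherwise every `k`-dimensional fibre meets a complement `W` of `T` in a unit vector, and
  -- compactness of the unit sphere of `W` yields such a vector in the fibre of `closure A` at `x`.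
  by_contra! hTk
  obtain ⟨W, hTW⟩ := T.exists_isCompl
  set K := sphere (0 : V) 1 ∩ W
  have : CompactSpace K := isCompact_iff_compactSpace.mp <|
    (isCompact_sphere 0 1).inter_right W.closed_of_finiteDimensional
  have hmeets : {z | ∃ S : Submodule ℝ V, k ≤ finrank ℝ S ∧ (S : Set V) ⊆ Prod.mk z ⁻¹' A} ⊆
      Prod.fst '' {p : X × K | (p.1, (p.2 : V)) ∈ closure A} := by
    rintro z ⟨S, hkS, hSA⟩
    have hSW : ¬Disjoint S W := fun h => by
      have := Submodule.finrank_add_finrank_le_of_disjoint h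
      have := Submodule.finrank_add_eq_of_isCompl hTW
      omega
    obtain ⟨v, hvS, hvW, hv⟩ : ∃ v ∈ S, v ∈ W ∧ v ≠ 0 := by
      simpa [Submodule.disjoint_def] using hSW
    refine ⟨(z, ⟨‖v‖⁻¹ • v, ?_, W.smul_mem _ hvW⟩), subset_closure (hSA (S.smul_mem _ hvS)), rfl⟩
    simp [norm_smul, hv]
  have hclosed : IsClosed (Prod.fst '' {p : X × K | (p.1, (p.2 : V)) ∈ closure A}) :=
    isClosedMap_fst_of_compactSpace _ <| isClosed_closure.preimage <| by fun_prop
  obtain ⟨⟨x', w, hw, hwW⟩, hxw, rfl⟩ := closure_minimal hmeets hclosed hx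
  have hw0 : w = 0 := (Submodule.disjoint_def.mp hTW.disjoint) w (hT hxw) hwW
  simp [hw0] at hw

/-- Taking the span makes this meaningful for any set; for a bundle the span is the fibre. -/
noncomputable def fibreRank {X V : Type*} [AddCommGroup V] [Module ℝ V] (E : Set (X × V))
    (a : X) : ℕ :=
  finrank ℝ (Submodule.span ℝ (Prod.mk a ⁻¹' E))

def iterateChangeSet {X V : Type*} (ρ : Set (X × V) → Set (X × V)) (E : Set (X × V)) (n : ℕ) :
    Set X :=
  {a | Prod.mk a ⁻¹' ρ^[n + 1] E ≠ Prod.mk a ⁻¹' ρ^[n] E}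

section

variable {X V : Type*} [AddCommGroup V] [Module ℝ V] {E F : Set (X × V)}

theorem IsBundle.coe_span_preimage (hE : IsBundle E) (a : X) :
    (Submodule.span ℝ (Prod.mk a ⁻¹' E) : Set V) = Prod.mk a ⁻¹' E := by
  obtain ⟨S, hS⟩ := hE a
  rw [show Prod.mk a ⁻¹' E = S from hS, Submodule.span_eq]

theorem fibreRank_le_finrank [FiniteDimensional ℝ V] (E : Set (X × V)) (a : X) :
    fibreRank E a ≤ finrank ℝ V :=
  Submodule.finrank_le _

theorem IsBundle.fibreRank_lt [FiniteDimensional ℝ V] (hE : IsBundle E) (hF : IsBundle F)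
    (hEF : E ⊆ F) {a : X} (hne : Prod.mk a ⁻¹' E ≠ Prod.mk a ⁻¹' F) :
    fibreRank E a < fibreRank F a := by
  refine Submodule.finrank_lt_finrank_of_lt <|
    (Submodule.span_mono (preimage_mono hEF)).lt_of_ne fun h => hne ?_
  rw [← hE.coe_span_preimage, h, hF.coe_span_preimage]

end

namespace IsGlaeserOperation

variable {X V : Type*} [MetricSpace X] [NormedAddCommGroup V] [NormedSpace ℝ V]
  {ρ : Set (X × V) → Set (X × V)} {E F : Set (X × V)}

theorem subset_apply (hρ : IsGlaeserOperation ρ) (hE : IsBundle E) : E ⊆ ρ E :=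
  subset_closure.trans (hρ.closure_subset E hE)

theorem isBundle_iterate (hρ : IsGlaeserOperation ρ) (hE : IsBundle E) (n : ℕ) :
    IsBundle (ρ^[n] E) := by
  induction n with
  | zero => exact hE
  | succ n ih => rw [iterate_succ_apply']; exact hρ.bundle _ ih

theorem setOf_preimage_ne_subset_closure (hρ : IsGlaeserOperation ρ) (hE : IsBundle E)
    (hF : IsBundle F) :
    {a | Prod.mk a ⁻¹' ρ E ≠ Prod.mk a ⁻¹' ρ F} ⊆
      closure {a | Prod.mk a ⁻¹' E ≠ Prod.mk a ⁻¹' F} := fun x hx => by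
  by_contra hxD
  exact hx <| hρ.isLocal E F hE hF _ isClosed_closure.isOpen_compl
    (fun a ha => not_not.mp fun h => ha (subset_closure h)) x hxD

theorem iterateChangeSet_succ_subset (hρ : IsGlaeserOperation ρ) (hE : IsBundle E) (n : ℕ) :
    iterateChangeSet ρ E (n + 1) ⊆ closure (iterateChangeSet ρ E n) := by
  simpa only [iterateChangeSet, iterate_succ_apply' ρ (n + 1), iterate_succ_apply' ρ n] using
    hρ.setOf_preimage_ne_subset_closure (hρ.isBundle_iterate hE (n + 1))
      (hρ.isBundle_iterate hE n)

theorem le_fibreRank_apply_of_mem_closure [FiniteDimensional ℝ V] (hρ : IsGlaeserOperation ρ)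
    (hE : IsBundle E) {k : ℕ} {x : X} (hx : x ∈ closure {z | k ≤ fibreRank E z}) :
    k ≤ fibreRank (ρ E) x := by
  refine finrank_le_of_mem_closure (closure_mono (fun z hz => ?_) hx)
    fun _ hv => Submodule.subset_span (hρ.closure_subset E hE hv)
  exact ⟨_, hz, (hE.coe_span_preimage z).subset⟩

theorem fibreRank_lt_of_mem_iterateChangeSet [FiniteDimensional ℝ V]
    (hρ : IsGlaeserOperation ρ) (hE : IsBundle E) {n : ℕ} {x : X}
    (hx : x ∈ iterateChangeSet ρ E n) :
    fibreRank (ρ^[n] E) x < fibreRank (ρ^[n + 1] E) x := by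
  refine (hρ.isBundle_iterate hE n).fibreRank_lt (hρ.isBundle_iterate hE (n + 1)) ?_ (Ne.symm hx)
  rw [iterate_succ_apply']
  exact hρ.subset_apply (hρ.isBundle_iterate hE n)

theorem le_fibreRank_of_mem_iterateChangeSet [FiniteDimensional ℝ V]
    (hρ : IsGlaeserOperation ρ) (hE : IsBundle E) (n : ℕ) {x : X}
    (hx : x ∈ iterateChangeSet ρ E n) :
    (n + 2) / 2 ≤ fibreRank (ρ^[n + 1] E) x := by
  induction n using Nat.twoStepInduction generalizing x with
  | zero => exact Nat.zero_lt_of_lt (hρ.fibreRank_lt_of_mem_iterateChangeSet hE hx)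
  | one => exact Nat.zero_lt_of_lt (hρ.fibreRank_lt_of_mem_iterateChangeSet hE hx)
  | more n ih _ =>
    have hxC : x ∈ closure (iterateChangeSet ρ E n) :=
      (hρ.iterateChangeSet_succ_subset hE (n + 1)).trans
        (closure_minimal (hρ.iterateChangeSet_succ_subset hE n) isClosed_closure) hx
    have hx' : x ∈ closure {z | (n + 2) / 2 ≤ fibreRank (ρ^[n + 1] E) z} :=
      closure_mono (fun z hz => ih hz) hxC
    have h₁ : (n + 2) / 2 ≤ fibreRank (ρ^[n + 2] E) x := by
      rw [iterate_succ_apply']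
      exact hρ.le_fibreRank_apply_of_mem_closure (hρ.isBundle_iterate hE (n + 1)) hx'
    have h₂ := hρ.fibreRank_lt_of_mem_iterateChangeSet hE hx
    omega

end IsGlaeserOperation

/-- Glaeser's stabilization lemma: the iterates of a Glaeser operation stabilize
after `2 * r` steps, where `r = dim V`. -/
theorem glaeser_iterate_stabilizes {X V : Type*} [MetricSpace X] [NormedAddCommGroup V]
    [NormedSpace ℝ V] [FiniteDimensional ℝ V] {r : ℕ} (hr : Module.finrank ℝ V = r)
    (ρ : Set (X × V) → Set (X × V)) (hρ : IsGlaeserOperation ρ)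
    (E : Set (X × V)) (hE : IsBundle E) :
    ∀ i : ℕ, 2 * r ≤ i → ρ^[i] E = ρ^[2 * r] E := by
  have hempty : iterateChangeSet ρ E (2 * r) = ∅ := eq_empty_of_forall_notMem fun x hx => by
    have hge := hρ.le_fibreRank_of_mem_iterateChangeSet hE (2 * r) hx
    have hle : fibreRank (ρ^[2 * r + 1] E) x ≤ r := hr ▸ fibreRank_le_finrank _ x
    omega
  have hfix : IsFixedPt ρ (ρ^[2 * r] E) := by
    rw [IsFixedPt, ← iterate_succ_apply' ρ (2 * r)]
    ext ⟨a, v⟩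
    have ha : a ∉ iterateChangeSet ρ E (2 * r) := hempty ▸ notMem_empty a
    exact Set.ext_iff.mp (not_not.mp ha) v
  intro i hi
  obtain ⟨j, rfl⟩ := Nat.exists_eq_add_of_le' hi
  rw [iterate_add_apply]
  exact hfix.iterate j
end

section
/- Let X be a metric space, V a real vector space of finite dimension r, ρ a Glaeser operation, and E a bundle of linear subspaces of V over X. Then Ê := ρ^{2r}(E) is a closed subset of X × V. -/
/-!
Write `Eₖ = ρ^[k] E`. These bundles increase with `k`, and `Eₖ₊₁ = ρ Eₖ` contains the closure
of `Eₖ`. Call `b` a jump point of level `k` if the fibres of `Eₖ` and `Eₖ₊₁` differ at `b`.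
By locality, jump points of level `k + 1` lie in the closure of those of level `k`. Fibre
dimension is lower semicontinuous under closure, by compactness of the unit sphere, and at a
jump point the fibre dimension increases strictly. Together these show that at a jump point of
level `k` the fibre of `Eₖ₊₁` has dimension at least `k / 2 + 1`. Hence there are no jump points
of level `2r`, so `E₂ᵣ = E₂ᵣ₊₁ ⊇ closure E₂ᵣ`.
-/

open Module Metric

lemma IsCompact.isClosed_setOf_exists_prod_mem {X Y : Type*} [TopologicalSpace X]
    [TopologicalSpace Y] {K : Set Y} (hK : IsCompact K) {G : Set (X × Y)} (hG : IsClosed G) :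
    IsClosed {a | ∃ y ∈ K, (a, y) ∈ G} := by
  have hfst : {a | ∃ y ∈ K, (a, y) ∈ G} = Prod.fst '' {p : X × K | (p.1, (p.2 : Y)) ∈ G} := by
    ext a
    simp
  have := isCompact_iff_compactSpace.mp hK
  rw [hfst]
  exact isClosedMap_fst_of_compactSpace _ (hG.preimage (by fun_prop))

section HighRank

variable {X V : Type*}

def highRankSet [AddCommGroup V] [Module ℝ V] (F : Set (X × V)) (m : ℕ) : Set X :=
  {c | ∃ S : Submodule ℝ V, m ≤ finrank ℝ S ∧ ∀ v ∈ S, (c, v) ∈ F}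

lemma mem_highRankSet_of_preimage_eq [AddCommGroup V] [Module ℝ V] {F : Set (X × V)} {b : X}
    {S : Submodule ℝ V} {m : ℕ} (hS : Prod.mk b ⁻¹' F = S) (hm : m ≤ finrank ℝ S) : b ∈ highRankSet F m :=
  ⟨S, hm, fun v hv => by rw [← SetLike.mem_coe, ← hS] at hv; exact hv⟩

/-- Lower semicontinuity of fibre dimension under taking closures. -/
theorem le_finrank_of_mem_closure_highRankSet [TopologicalSpace X] [NormedAddCommGroup V]
    [NormedSpace ℝ V] [FiniteDimensional ℝ V] {F : Set (X × V)} {W : Submodule ℝ V} {b : X}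
    {m : ℕ} (hb : b ∈ closure (highRankSet F m)) (hW : ∀ v, (b, v) ∈ closure F → v ∈ W) :
    m ≤ finrank ℝ W := by
  by_contra! hlt
  obtain ⟨C, hC⟩ := W.exists_isCompl
  have hK : IsCompact ((C : Set V) ∩ sphere 0 1) :=
    (isCompact_sphere 0 1).inter_left C.closed_of_finiteDimensional
  -- A subspace of dimension `m > dim W` meets the complement `C` of `W` in a unit vector.
  have hsub : highRankSet F m ⊆ {a | ∃ y ∈ (C : Set V) ∩ sphere 0 1, (a, y) ∈ closure F} := by
    rintro c ⟨S, hS, hSF⟩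
    have hSC : S ⊓ C ≠ ⊥ := fun h => by
      have := Submodule.finrank_add_finrank_le_of_disjoint (disjoint_iff.mpr h)
      have := Submodule.finrank_add_eq_of_isCompl hC
      omega
    obtain ⟨x, ⟨hxS, hxC⟩, hx0⟩ := Submodule.exists_mem_ne_zero_of_ne_bot hSC
    exact ⟨‖x‖⁻¹ • x, ⟨C.smul_mem _ hxC, by simp [norm_smul, hx0]⟩,
      subset_closure (hSF _ (S.smul_mem _ hxS))⟩
  obtain ⟨x, ⟨hxC, hx1⟩, hbx⟩ :=
    (hK.isClosed_setOf_exists_prod_mem isClosed_closure).closure_subset_iff.mpr hsub hb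
  have hx0 : x ∈ W ⊓ C := ⟨hW x hbx, hxC⟩
  rw [hC.inf_eq_bot, Submodule.mem_bot] at hx0
  simp [hx0] at hx1

end HighRank

section Glaeser

variable {X V : Type*} [MetricSpace X] [NormedAddCommGroup V] [NormedSpace ℝ V]
  {ρ : Set (X × V) → Set (X × V)} {E : Set (X × V)}

def jumpSet (ρ : Set (X × V) → Set (X × V)) (E : Set (X × V)) (k : ℕ) : Set X :=
  {a | Prod.mk a ⁻¹' ρ^[k] E ≠ Prod.mk a ⁻¹' ρ^[k + 1] E}

namespace IsGlaeserOperation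

variable (hρ : IsGlaeserOperation ρ) (hE : IsBundle E)
include hρ hE

lemma isBundle_iterate_s1 (k : ℕ) : IsBundle (ρ^[k] E) := by
  induction k with
  | zero => exact hE
  | succ k ih => rw [Function.iterate_succ_apply']; exact hρ.bundle _ ih

lemma closure_iterate_subset (k : ℕ) : closure (ρ^[k] E) ⊆ ρ^[k + 1] E := by
  rw [Function.iterate_succ_apply']
  exact hρ.closure_subset _ (hρ.isBundle_iterate_s1 hE k)

lemma jumpSet_succ_subset_closure (k : ℕ) :
    jumpSet ρ E (k + 1) ⊆ closure (jumpSet ρ E k) := by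
  intro b hb
  by_contra hbk
  apply hb
  have hagree : ∀ a ∈ (closure (jumpSet ρ E k))ᶜ,
      Prod.mk a ⁻¹' ρ^[k] E = Prod.mk a ⁻¹' ρ^[k + 1] E :=
    fun a ha => not_not.mp fun h => ha (subset_closure h)
  have := hρ.isLocal _ _ (hρ.isBundle_iterate_s1 hE k) (hρ.isBundle_iterate_s1 hE (k + 1)) _
    isClosed_closure.isOpen_compl hagree b hbk
  rwa [← Function.iterate_succ_apply' ρ, ← Function.iterate_succ_apply' ρ] at this

variable [FiniteDimensional ℝ V]

lemma mem_highRankSet_succ_of_mem_jumpSet {k m : ℕ} {b : X} (hb : b ∈ jumpSet ρ E k)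
    (hm : b ∈ highRankSet (ρ^[k] E) m) : b ∈ highRankSet (ρ^[k + 1] E) (m + 1) := by
  obtain ⟨S, hSm, hSE⟩ := hm
  obtain ⟨W, hW⟩ := hρ.isBundle_iterate_s1 hE k b
  obtain ⟨T, hT⟩ := hρ.isBundle_iterate_s1 hE (k + 1) b
  have hSW : S ≤ W := fun v hv => by
    rw [← SetLike.mem_coe, ← hW]
    exact hSE v hv
  have hWT : W < T := by
    refine lt_of_le_of_ne (fun v hv => ?_) ?_
    · rw [← SetLike.mem_coe, ← hW] at hv
      rw [← SetLike.mem_coe, ← hT]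
      exact (subset_closure.trans (hρ.closure_iterate_subset hE k)) hv
    · rintro rfl
      exact hb (hW.trans hT.symm)
  refine mem_highRankSet_of_preimage_eq hT ?_
  have := Submodule.finrank_mono hSW
  have := Submodule.finrank_lt_finrank_of_lt hWT
  omega

/-- Two levels of locality are spent for each unit of dimension gained by semicontinuity. -/
theorem jumpSet_subset_highRankSet (k : ℕ) :
    jumpSet ρ E k ⊆ highRankSet (ρ^[k + 1] E) (k / 2 + 1) := by
  induction k using Nat.strong_induction_on with
  | _ k ih =>
    intro b hb
    obtain ⟨S, hS⟩ := hρ.isBundle_iterate_s1 hE k b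
    obtain _ | _ | k := k
    · exact hρ.mem_highRankSet_succ_of_mem_jumpSet hE hb
        (mem_highRankSet_of_preimage_eq hS (Nat.zero_le _))
    · exact hρ.mem_highRankSet_succ_of_mem_jumpSet hE hb
        (mem_highRankSet_of_preimage_eq hS (Nat.zero_le _))
    have hbk : b ∈ closure (jumpSet ρ E k) :=
      closure_minimal (hρ.jumpSet_succ_subset_closure hE k) isClosed_closure
        (hρ.jumpSet_succ_subset_closure hE (k + 1) hb)
    have hS_rank : k / 2 + 1 ≤ finrank ℝ S := by
      refine le_finrank_of_mem_closure_highRankSet (closure_mono (ih k (by omega)) hbk)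
        fun v hv => ?_
      rw [← SetLike.mem_coe, ← hS]
      exact hρ.closure_iterate_subset hE (k + 1) hv
    convert hρ.mem_highRankSet_succ_of_mem_jumpSet hE hb
      (mem_highRankSet_of_preimage_eq hS hS_rank) using 2
    omega

end IsGlaeserOperation

end Glaeser

/-- The saturation `Ê = ρ^[2r] E` of a bundle under a Glaeser operation is closed. -/
theorem glaeser_saturation_isClosed {X V : Type*} [MetricSpace X] [NormedAddCommGroup V]
    [NormedSpace ℝ V] [FiniteDimensional ℝ V] {r : ℕ} (hr : Module.finrank ℝ V = r)
    (ρ : Set (X × V) → Set (X × V)) (hρ : IsGlaeserOperation ρ)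
    (E : Set (X × V)) (hE : IsBundle E) :
    IsClosed (ρ^[2 * r] E) := by
  have hno_jump : ∀ a, a ∉ jumpSet ρ E (2 * r) := fun a ha => by
    obtain ⟨S, hS, -⟩ := hρ.jumpSet_subset_highRankSet hE (2 * r) ha
    have := S.finrank_le
    omega
  have hstable : ρ^[2 * r + 1] E = ρ^[2 * r] E := by
    ext ⟨a, v⟩
    exact (Set.ext_iff.mp (not_not.mp (hno_jump a)) v).symm
  exact isClosed_of_closure_subset (hstable ▸ hρ.closure_iterate_subset hE (2 * r))
end

section
/- Let E be a bundle of linear subspaces of a finite-dimensional real vector space V over a metric space X, and let ρ be any Glaeser operation. Define λ(E) to be the bundle whose fibre at a ∈ X is the linear span of the fibre of the closure of E at a. Then λ(E) ⊆ ρ(E), and λ is itself a Glaeser operation. -/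
/-- The operation `λ`: the fibre of `λ(E)` at `a` is the span of the fibre of the
closure of `E` at `a`. -/
def glaeserLambda {X V : Type*} [MetricSpace X] [NormedAddCommGroup V] [NormedSpace ℝ V]
    (E : Set (X × V)) : Set (X × V) :=
  {q : X × V | q.2 ∈ Submodule.span ℝ {v : V | (q.1, v) ∈ closure E}}

/-- `λ(E) ⊆ ρ(E)` for every Glaeser operation `ρ` and bundle `E`; and `λ` is itself
a Glaeser operation. -/
theorem glaeserLambda_le_and_isGlaeser {X V : Type*} [MetricSpace X] [NormedAddCommGroup V]
    [NormedSpace ℝ V] [FiniteDimensional ℝ V] :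
    (∀ ρ : Set (X × V) → Set (X × V), IsGlaeserOperation ρ →
      ∀ E : Set (X × V), IsBundle E → glaeserLambda E ⊆ ρ E) ∧
    IsGlaeserOperation (glaeserLambda (X := X) (V := V)) := by
  constructor
  · intro ρ hρ E hE ⟨a, v⟩ hv
    obtain ⟨S, hS⟩ := hρ.bundle E hE a
    have hsub : {v : V | (a, v) ∈ closure E} ⊆ (S : Set V) := by
      intro w hw
      rw [← hS]
      exact hρ.closure_subset E hE hw
    have hv' : v ∈ S := Submodule.span_le.mpr hsub hv
    have : v ∈ {v : V | (a, v) ∈ ρ E} := hS ▸ hv'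
    exact this
  · constructor
    · intro E _ a
      exact ⟨Submodule.span ℝ {v : V | (a, v) ∈ closure E}, rfl⟩
    · intro E _ ⟨a, v⟩ hv
      exact Submodule.subset_span hv
    · intro E F _ _ U hU hEF a ha
      have key : ∀ E F : Set (X × V),
          (E ∩ U ×ˢ (Set.univ : Set V) = F ∩ U ×ˢ Set.univ) →
          {v : V | (a, v) ∈ closure E} ⊆ {v : V | (a, v) ∈ closure F} := by
        intro E F h v hv
        have hW : IsOpen (U ×ˢ (Set.univ : Set V)) := hU.prod isOpen_univ
        have hm : (a, v) ∈ U ×ˢ (Set.univ : Set V) := ⟨ha, trivial⟩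
        have h2 : (a, v) ∈ closure (U ×ˢ (Set.univ : Set V) ∩ E) :=
          hW.inter_closure ⟨hm, hv⟩
        rw [Set.inter_comm, h] at h2
        exact closure_mono Set.inter_subset_left h2
      have hEq : E ∩ U ×ˢ (Set.univ : Set V) = F ∩ U ×ˢ Set.univ := by
        ext ⟨b, w⟩
        simp only [Set.mem_inter_iff, Set.mem_prod, Set.mem_univ, and_true]
        constructor
        · rintro ⟨h1, h2⟩
          have : w ∈ {v : V | (b, v) ∈ F} := hEF b h2 ▸ h1
          exact ⟨this, h2⟩
        · rintro ⟨h1, h2⟩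
          have : w ∈ {v : V | (b, v) ∈ E} := (hEF b h2).symm ▸ h1
          exact ⟨this, h2⟩
      have : {v : V | (a, v) ∈ closure E} = {v : V | (a, v) ∈ closure F} :=
        Set.Subset.antisymm (key E F hEq) (key F E hEq.symm)
      ext v
      simp only [glaeserLambda, Set.mem_setOf_eq, this]
end

section
/- Let X ⊂ U ⊂ ℝⁿ with U open and X closed in U. Suppose (a_{0j}), (a_{1j}) are sequences in X converging to a common point a ∈ X, (ξ_{0j}), (ξ_{1j}) are sequences of linear functionals on P_p such that ξ_{0j} + ξ_{1j} converges to ξ ∈ P_p*, and there is a constant c such that |a_{ij} − a_{0j}|^{p−|α|} |ξ_{ij}((x−a_{ij})^α/α!)| ≤ c for all i ∈ {0,1}, all j, and all |α| ≤ p. If F = (F^α)_{|α|≤p} is a C^p Whitney field on X, then ξ(T^p_a F) = lim_{j→∞} (ξ_{0j}(T^p_{a_{0j}} F) + ξ_{1j}(T^p_{a_{1j}} F)). -/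
set_option linter.unusedVariables false
open Filter Topology

/-- The space `P_p(ℝⁿ)` of polynomial functions of degree at most `p` on `ℝⁿ`,
realized as a submodule of the space of all functions `ℝⁿ → ℝ`. -/
noncomputable def polyFun (n p : ℕ) : Submodule ℝ ((Fin n → ℝ) → ℝ) where
  carrier := {f | ∃ P : MvPolynomial (Fin n) ℝ, P.totalDegree ≤ p ∧
    f = fun x => MvPolynomial.eval x P}
  zero_mem' := ⟨0, by simp, by funext x; simp⟩
  add_mem' := by
    rintro f g ⟨P, hP, rfl⟩ ⟨Q, hQ, rfl⟩
    exact ⟨P + Q, le_trans (MvPolynomial.totalDegree_add P Q) (max_le hP hQ),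
      by funext x; simp⟩
  smul_mem' := by
    rintro c f ⟨P, hP, rfl⟩
    refine ⟨MvPolynomial.C c * P, le_trans (MvPolynomial.totalDegree_mul _ _) ?_,
      by funext x; simp⟩
    simpa [MvPolynomial.totalDegree_C] using hP

/-- `P_p(ℝⁿ)` as a type (with the topology induced from pointwise convergence,
which is the canonical topology on this finite-dimensional space). -/
abbrev Pp (n p : ℕ) : Type := ↥(polyFun n p)

/-- The dual space `P_p(ℝⁿ)*`, with its (weak-*) topology; since `P_p` is
finite dimensional, this is the canonical topology on the dual. -/
abbrev PpD (n p : ℕ) : Type := WeakDual ℝ (Pp n p)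

/-- The evaluation functional `δ_a ∈ P_p*`, `δ_a(P) = P(a)`. -/
noncomputable def deltaF (n p : ℕ) (a : Fin n → ℝ) : PpD n p :=
  ⟨{ toFun := fun f => (f : (Fin n → ℝ) → ℝ) a,
     map_add' := fun f g => rfl,
     map_smul' := fun c f => rfl },
   (continuous_apply a).comp continuous_subtype_val⟩

/-- The function `x ↦ (x-b)^α / α!` on `ℝⁿ`. -/
noncomputable def monF (n : ℕ) (b : Fin n → ℝ) (α : Fin n → ℕ) : (Fin n → ℝ) → ℝ :=
  fun x => (∏ i, ((α i).factorial : ℝ))⁻¹ * ∏ i, (x i - b i) ^ α i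

theorem monF_mem (n p : ℕ) (b : Fin n → ℝ) (α : Fin n → ℕ) (hα : ∑ i, α i ≤ p) :
    monF n b α ∈ polyFun n p := by
  refine ⟨MvPolynomial.C (∏ i, ((α i).factorial : ℝ))⁻¹ *
    ∏ i, (MvPolynomial.X i - MvPolynomial.C (b i)) ^ α i, ?_, ?_⟩
  · refine le_trans (MvPolynomial.totalDegree_mul _ _) ?_
    rw [MvPolynomial.totalDegree_C]
    rw [zero_add]
    refine le_trans (MvPolynomial.totalDegree_finset_prod _ _) (le_trans
      (Finset.sum_le_sum fun i _ => ?_) hα)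
    refine le_trans (MvPolynomial.totalDegree_pow _ _) ?_
    have h1 : (MvPolynomial.X i - MvPolynomial.C (b i) : MvPolynomial (Fin n) ℝ).totalDegree ≤ 1 := by
      rw [sub_eq_add_neg]
      refine le_trans (MvPolynomial.totalDegree_add _ _) ?_
      simp [MvPolynomial.totalDegree_X, MvPolynomial.totalDegree_neg,
        MvPolynomial.totalDegree_C]
    calc α i * (MvPolynomial.X i - MvPolynomial.C (b i) :
        MvPolynomial (Fin n) ℝ).totalDegree ≤ α i * 1 := Nat.mul_le_mul_left _ h1
      _ = α i := mul_one _
  · funext x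
    simp [monF, MvPolynomial.eval_prod]

/-- The monomial `(x-b)^α / α!` as an element of `P_p` (junk value `0` if `|α| > p`). -/
noncomputable def mon (n p : ℕ) (b : Fin n → ℝ) (α : Fin n → ℕ) : Pp n p :=
  if h : ∑ i, α i ≤ p then ⟨monF n b α, monF_mem n p b α h⟩ else 0

/-- The finite set of multiindices `α ∈ ℕⁿ` with `|α| ≤ p`. -/
noncomputable def degSet (n p : ℕ) : Finset (Fin n → ℕ) :=
  (Fintype.piFinset fun _ : Fin n => Finset.range (p + 1)).filter fun α => ∑ i, α i ≤ p

/-- The polynomial `T^p_a F(x) = Σ_{|α| ≤ p} F^α(a) (x-a)^α / α!` attached to a family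
`F = (F^α)` of functions. -/
noncomputable def tfield (n p : ℕ) (F : (Fin n → ℕ) → (Fin n → ℝ) → ℝ)
    (a : Fin n → ℝ) : Pp n p :=
  ∑ α ∈ degSet n p, F α a • mon n p a α

/-- The Whitney remainder `(R^p_a F)^α (b) = F^α(b) - Σ_{|β| ≤ p-|α|} F^{α+β}(a)(b-a)^β/β!`. -/
noncomputable def rem (n p : ℕ) (F : (Fin n → ℕ) → (Fin n → ℝ) → ℝ)
    (a b : Fin n → ℝ) (α : Fin n → ℕ) : ℝ :=
  F α b - ∑ β ∈ degSet n (p - ∑ i, α i),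
    F (α + β) a * (∏ i, (b i - a i) ^ β i) / (∏ i, ((β i).factorial : ℝ))

/-- `F = (F^α)_{|α| ≤ p}` is a `C^p` Whitney field on `X`: the rescaled remainders
`δ_α(a,b) = (R^p_a F)^α(b) / |b-a|^{p-|α|}` tend to `0` as `|a-b| → 0`, `a, b ∈ X`. -/
def IsWhitneyField (n p : ℕ) (F : (Fin n → ℕ) → (Fin n → ℝ) → ℝ)
    (X : Set (Fin n → ℝ)) : Prop :=
  ∀ α : Fin n → ℕ, ∑ i, α i ≤ p → ∀ ε > (0 : ℝ), ∃ δ > (0 : ℝ),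
    ∀ a ∈ X, ∀ b ∈ X, a ≠ b → ‖b - a‖ < δ →
      |rem n p F a b α| ≤ ε * ‖b - a‖ ^ (p - ∑ i, α i)

/-- The set `ΔE` of (4.9): sums `ξ + η` of functionals from two fibres of `E`,
subject to the bound `|a-b|^{p-|α|} |η((x-b)^α/α!)| ≤ 1`. -/
noncomputable def deltaSet (n p : ℕ) (E : Set ((Fin n → ℝ) × PpD n p)) :
    Set ((Fin n → ℝ) × (Fin n → ℝ) × PpD n p) :=
  {q | ∃ a b ξ η, (a, ξ) ∈ E ∧ (b, η) ∈ E ∧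
    (∀ α : Fin n → ℕ, ∑ i, α i ≤ p →
      ‖a - b‖ ^ (p - ∑ i, α i) * |η (mon n p b α)| ≤ 1) ∧
    q = (a, b, ξ + η)}

/-- The Glaeser operation (4.10)-(4.11): `ρ(E)_a` is the span of the diagonal trace
of the closure of `ΔE`. -/
noncomputable def rhoOp (n p : ℕ) (X : Set (Fin n → ℝ))
    (E : Set ((Fin n → ℝ) × PpD n p)) : Set ((Fin n → ℝ) × PpD n p) :=
  {q | q.1 ∈ X ∧ q.2 ∈ Submodule.span ℝ
    {ξ : PpD n p | (q.1, q.1, ξ) ∈ closure (deltaSet n p E)}}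

/-- The initial bundle `{(a, λδ_a) : a ∈ X, λ ∈ ℝ}`. -/
noncomputable def e0 (n p : ℕ) (X : Set (Fin n → ℝ)) : Set ((Fin n → ℝ) × PpD n p) :=
  {q | q.1 ∈ X ∧ ∃ c : ℝ, q.2 = c • deltaF n p q.1}

/-- The paratangent bundle of order `p` of `X` (Definition 4.12): the Glaeser
saturation (stable iterate, reached after `2·dim` steps) of the delta bundle. -/
noncomputable def tau (n p : ℕ) (X : Set (Fin n → ℝ)) : Set ((Fin n → ℝ) × PpD n p) :=
  (rhoOp n p X)^[2 * Module.finrank ℝ (PpD n p)] (e0 n p X)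

/-- `ΔΦ` of (4.14), for bundles of subspaces of `P_p* × ℝ`. -/
noncomputable def deltaSetF (n p : ℕ) (Φ : Set ((Fin n → ℝ) × (PpD n p × ℝ))) :
    Set ((Fin n → ℝ) × (Fin n → ℝ) × (PpD n p × ℝ)) :=
  {q | ∃ a b ξ η, (a, ξ) ∈ Φ ∧ (b, η) ∈ Φ ∧
    (∀ α : Fin n → ℕ, ∑ i, α i ≤ p →
      ‖a - b‖ ^ (p - ∑ i, α i) * |η.1 (mon n p b α)| ≤ 1) ∧
    q = (a, b, ξ + η)}

/-- The Glaeser operation (4.15) on bundles of subspaces of `P_p* × ℝ`. -/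
noncomputable def rhoOpF (n p : ℕ) (X : Set (Fin n → ℝ))
    (Φ : Set ((Fin n → ℝ) × (PpD n p × ℝ))) : Set ((Fin n → ℝ) × (PpD n p × ℝ)) :=
  {q | q.1 ∈ X ∧ q.2 ∈ Submodule.span ℝ
    {v : PpD n p × ℝ | (q.1, q.1, v) ∈ closure (deltaSetF n p Φ)}}

/-- The initial bundle `{(a, (λδ_a, λ f(a))) : a ∈ X, λ ∈ ℝ}`. -/
noncomputable def phi0 (n p : ℕ) (f : (Fin n → ℝ) → ℝ) (X : Set (Fin n → ℝ)) :
    Set ((Fin n → ℝ) × (PpD n p × ℝ)) :=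
  {q | q.1 ∈ X ∧ ∃ c : ℝ, q.2 = (c • deltaF n p q.1, c * f q.1)}

/-- `∇^p f` (Definition 4.16): the Glaeser saturation of `{(a, λδ_a, λ f(a))}`. -/
noncomputable def nabla (n p : ℕ) (f : (Fin n → ℝ) → ℝ) (X : Set (Fin n → ℝ)) :
    Set ((Fin n → ℝ) × (PpD n p × ℝ)) :=
  (rhoOpF n p X)^[2 * Module.finrank ℝ (PpD n p × ℝ)] (phi0 n p f X)

/-- `Φ` is the graph of a function `T → ℝ`: `Φ ⊆ T × ℝ` and over each point of `T`
there is exactly one value. -/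
def IsGraphOn (n p : ℕ) (Φ : Set ((Fin n → ℝ) × (PpD n p × ℝ)))
    (T : Set ((Fin n → ℝ) × PpD n p)) : Prop :=
  (∀ a ξ c, (a, (ξ, c)) ∈ Φ → (a, ξ) ∈ T) ∧
  ∀ a ξ, (a, ξ) ∈ T → ∃! c : ℝ, (a, (ξ, c)) ∈ Φ

/-- Partial derivative `∂/∂x_i` of a function on `ℝⁿ`. -/
noncomputable def pder (n : ℕ) (i : Fin n) (h : (Fin n → ℝ) → ℝ) : (Fin n → ℝ) → ℝ :=
  fun a => fderiv ℝ h a (Pi.single i 1)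

/-- Iterated partial derivative `(∂/∂x_i)^k`. -/
noncomputable def pderPow (n : ℕ) (i : Fin n) : ℕ → ((Fin n → ℝ) → ℝ) → ((Fin n → ℝ) → ℝ)
  | 0 => id
  | k + 1 => fun h => pder n i (pderPow n i k h)

/-- Multi-index partial derivative `D^α = ∏_i (∂/∂x_i)^{α_i}`. -/
noncomputable def dAlpha (n : ℕ) (α : Fin n → ℕ) (h : (Fin n → ℝ) → ℝ) :
    (Fin n → ℝ) → ℝ :=
  (List.finRange n).foldr (fun i g => pderPow n i (α i) g) h

/-- The Taylor polynomial of order `p` of `h` at `a`, as an element of `P_p`. -/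
noncomputable def taylorPoly (n p : ℕ) (h : (Fin n → ℝ) → ℝ) (a : Fin n → ℝ) : Pp n p :=
  ∑ α ∈ degSet n p, dAlpha n α h a • mon n p a α

/-- The truncation at order `p` of the formal power series `Σ_α c_α (x-a)^α`,
as an element of `P_p`. -/
noncomputable def truncSeries (n p : ℕ) (c : (Fin n → ℕ) → ℝ) (a : Fin n → ℝ) : Pp n p :=
  ∑ α ∈ degSet n p, (c α * ∏ i, ((α i).factorial : ℝ)) • mon n p a α

/-- The formal local ideal `F_a(X)`: formal power series (centered at `a`, given by
their coefficients) all of whose truncations `T^p_a F(x)` are `o(|x-a|^p)` on `X`. -/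
def formalIdeal (n : ℕ) (X : Set (Fin n → ℝ)) (a : Fin n → ℝ) :
    Set ((Fin n → ℕ) → ℝ) :=
  {c | ∀ p : ℕ, ∀ ε > (0 : ℝ), ∃ δ > (0 : ℝ), ∀ x ∈ X, ‖x - a‖ < δ →
    |(truncSeries n p c a : (Fin n → ℝ) → ℝ) x| ≤ ε * ‖x - a‖ ^ p}

/-- `T^p_a I^q(X)`: Taylor polynomials of order `p` at `a` of `C^q` functions
vanishing on `X`. -/
def tIdeal (n q p : ℕ) (X : Set (Fin n → ℝ)) (a : Fin n → ℝ) : Set (Pp n p) :=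
  {Q | ∃ h : (Fin n → ℝ) → ℝ, ContDiff ℝ q h ∧ (∀ x ∈ X, h x = 0) ∧
    Q = taylorPoly n p h a}

/-- The pullback `φ*_b : P_p(ℝⁿ) → P_p(ℝᵐ)`, `P ↦ T^p_b (P ∘ φ)`. -/
noncomputable def pullPoly (n m p : ℕ) (φ : (Fin m → ℝ) → (Fin n → ℝ))
    (b : Fin m → ℝ) (P : Pp n p) : Pp m p :=
  taylorPoly m p (fun y => (P : (Fin n → ℝ) → ℝ) (φ y)) b


section Aux

open Finset

lemma mem_degSet {n p : ℕ} {α : Fin n → ℕ} : α ∈ degSet n p ↔ ∑ i, α i ≤ p := by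
  simp only [degSet, Finset.mem_filter, Fintype.mem_piFinset, Finset.mem_range, Nat.lt_succ_iff]
  refine ⟨fun h => h.2, fun h => ⟨fun i => le_trans ?_ h, h⟩⟩
  exact Finset.single_le_sum (f := fun i => α i) (fun _ _ => Nat.zero_le _) (Finset.mem_univ i)

lemma mon_coe {n p : ℕ} (b : Fin n → ℝ) {α : Fin n → ℕ} (h : ∑ i, α i ≤ p) :
    (mon n p b α : (Fin n → ℝ) → ℝ) = monF n b α := by
  rw [mon, dif_pos h]

lemma tfield_coe (n p : ℕ) (F : (Fin n → ℕ) → (Fin n → ℝ) → ℝ) (a : Fin n → ℝ)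
    (x : Fin n → ℝ) :
    (tfield n p F a : (Fin n → ℝ) → ℝ) x = ∑ α ∈ degSet n p, F α a * monF n a α x := by
  rw [tfield]
  rw [AddSubmonoidClass.coe_finset_sum, Finset.sum_apply]
  refine Finset.sum_congr rfl fun α hα => ?_
  rw [SetLike.val_smul, Pi.smul_apply, smul_eq_mul, mon_coe a (mem_degSet.1 hα)]

/-- The linear map `MvPolynomial → functions` given by evaluation. -/
noncomputable def evalL (n : ℕ) : MvPolynomial (Fin n) ℝ →ₗ[ℝ] ((Fin n → ℝ) → ℝ) where
  toFun P := fun x => MvPolynomial.eval x P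
  map_add' P Q := by funext x; simp
  map_smul' c P := by funext x; simp

instance polyFun_fd (n p : ℕ) : FiniteDimensional ℝ (Pp n p) := by
  have hle : polyFun n p ≤ (MvPolynomial.restrictTotalDegree (Fin n) ℝ p).map (evalL n) := by
    rintro f ⟨P, hP, rfl⟩
    exact ⟨P, (MvPolynomial.mem_restrictTotalDegree _ _ _).2 hP, rfl⟩
  exact Submodule.finiteDimensional_of_le hle

/-- The key combinatorial (Taylor re-centering) identity, pointwise. -/
lemma taylor_expand (n p : ℕ) (F : (Fin n → ℕ) → (Fin n → ℝ) → ℝ)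
    (a b x : Fin n → ℝ) :
    ∑ γ ∈ degSet n p, F γ a * monF n a γ x =
    ∑ α ∈ degSet n p, (∑ β ∈ degSet n (p - ∑ i, α i),
      F (α + β) a * (∏ i, (b i - a i) ^ β i) / (∏ i, ((β i).factorial : ℝ))) *
        monF n b α x := by
  have key : ∀ γ : Fin n → ℕ, ∏ i, (x i - a i) ^ γ i =
      ∑ α ∈ Fintype.piFinset (fun i => Finset.range (γ i + 1)),
        ∏ i, ((x i - b i) ^ α i * (b i - a i) ^ (γ i - α i) * ((γ i).choose (α i) : ℝ)) := by
    intro γ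
    calc ∏ i, (x i - a i) ^ γ i
        = ∏ i, ∑ k ∈ Finset.range (γ i + 1),
            ((x i - b i) ^ k * (b i - a i) ^ (γ i - k) * ((γ i).choose k : ℝ)) := by
          refine Finset.prod_congr rfl fun i _ => ?_
          rw [← sub_add_sub_cancel (x i) (b i) (a i), add_pow]
      _ = _ := Finset.prod_univ_sum _ _
  calc ∑ γ ∈ degSet n p, F γ a * monF n a γ x
      = ∑ γ ∈ degSet n p, ∑ α ∈ Fintype.piFinset (fun i => Finset.range (γ i + 1)),
          F γ a * ((∏ i, ((γ i).factorial : ℝ))⁻¹ *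
            ∏ i, ((x i - b i) ^ α i * (b i - a i) ^ (γ i - α i) * ((γ i).choose (α i) : ℝ))) := by
        refine Finset.sum_congr rfl fun γ _ => ?_
        rw [monF, key, Finset.mul_sum, Finset.mul_sum]
    _ = ∑ q ∈ (degSet n p).sigma (fun γ => Fintype.piFinset fun i => Finset.range (γ i + 1)),
          F q.1 a * ((∏ i, ((q.1 i).factorial : ℝ))⁻¹ *
            ∏ i, ((x i - b i) ^ q.2 i * (b i - a i) ^ (q.1 i - q.2 i) *
              ((q.1 i).choose (q.2 i) : ℝ))) := Finset.sum_sigma' _ _ _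
    _ = ∑ q ∈ (degSet n p).sigma (fun α : Fin n → ℕ => degSet n (p - ∑ i, α i)),
          F (q.1 + q.2) a * (∏ i, (b i - a i) ^ q.2 i) / (∏ i, ((q.2 i).factorial : ℝ)) *
            monF n b q.1 x := by
        refine Finset.sum_bij' (fun q _ => ⟨q.2, fun i => q.1 i - q.2 i⟩)
          (fun q _ => ⟨q.1 + q.2, q.1⟩) ?_ ?_ ?_ ?_ ?_
        · rintro ⟨γ, α⟩ hq
          rw [Finset.mem_sigma] at hq
          obtain ⟨hγ, hα⟩ := hq
          rw [mem_degSet] at hγ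
          simp only [Fintype.mem_piFinset, Finset.mem_range, Nat.lt_succ_iff] at hα
          rw [Finset.mem_sigma, mem_degSet, mem_degSet]
          have h1 : ∑ i, α i ≤ ∑ i, γ i := Finset.sum_le_sum fun i _ => hα i
          refine ⟨le_trans h1 hγ, ?_⟩
          rw [Finset.sum_tsub_distrib _ fun i _ => hα i]
          exact Nat.sub_le_sub_right hγ _
        · rintro ⟨α, β⟩ hq
          rw [Finset.mem_sigma] at hq
          obtain ⟨hα, hβ⟩ := hq
          rw [mem_degSet] at hα
          rw [mem_degSet] at hβ
          rw [Finset.mem_sigma, mem_degSet]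
          dsimp only at hα hβ ⊢
          constructor
          · have h : ∑ i, (α + β) i = ∑ i, α i + ∑ i, β i := by
              simp [Finset.sum_add_distrib]
            rw [h]
            omega
          · simp only [Fintype.mem_piFinset, Finset.mem_range, Nat.lt_succ_iff]
            intro i
            simp [Pi.add_apply]
        · rintro ⟨γ, α⟩ hq
          rw [Finset.mem_sigma] at hq
          simp only [Fintype.mem_piFinset, Finset.mem_range, Nat.lt_succ_iff] at hq
          have : (α + fun i => γ i - α i) = γ := funext fun i => Nat.add_sub_cancel' (hq.2 i)
          simp [this]
        · rintro ⟨α, β⟩ hq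
          have : (fun i => (α + β) i - α i) = β := funext fun i => Nat.add_sub_cancel_left _ _
          simp [this]
        · rintro ⟨γ, α⟩ hq
          rw [Finset.mem_sigma] at hq
          obtain ⟨hγ, hα⟩ := hq
          simp only [Fintype.mem_piFinset, Finset.mem_range, Nat.lt_succ_iff] at hα
          have hγα : (α + fun i => γ i - α i) = γ :=
            funext fun i => Nat.add_sub_cancel' (hα i)
          rw [hγα, monF]
          -- factorial identity
          have hfac : (∏ i, ((γ i).factorial : ℝ)) =
              (∏ i, ((γ i).choose (α i) : ℝ)) * (∏ i, ((α i).factorial : ℝ)) *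
                (∏ i, ((γ i - α i).factorial : ℝ)) := by
            rw [← Finset.prod_mul_distrib, ← Finset.prod_mul_distrib]
            refine Finset.prod_congr rfl fun i _ => ?_
            rw [← Nat.cast_mul, ← Nat.cast_mul, Nat.choose_mul_factorial_mul_factorial (hα i)]
          have hchoose : ∀ i, (0:ℝ) < ((γ i).choose (α i) : ℝ) := fun i => by
            exact_mod_cast Nat.choose_pos (hα i)
          have h1 : (0:ℝ) < ∏ i, ((γ i).choose (α i) : ℝ) := Finset.prod_pos fun i _ => hchoose i
          have h2 : (0:ℝ) < ∏ i, ((α i).factorial : ℝ) :=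
            Finset.prod_pos fun i _ => by exact_mod_cast (α i).factorial_pos
          have h3 : (0:ℝ) < ∏ i, ((γ i - α i).factorial : ℝ) :=
            Finset.prod_pos fun i _ => by exact_mod_cast (γ i - α i).factorial_pos
          rw [Finset.prod_mul_distrib, Finset.prod_mul_distrib, hfac]
          field_simp
    _ = ∑ α ∈ degSet n p, ∑ β ∈ degSet n (p - ∑ i, α i),
          F (α + β) a * (∏ i, (b i - a i) ^ β i) / (∏ i, ((β i).factorial : ℝ)) *
            monF n b α x := by rw [Finset.sum_sigma]
    _ = _ := by
        refine Finset.sum_congr rfl fun α _ => ?_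
        rw [Finset.sum_mul]

/-- The recentered Taylor field identity (Lemma: `T_b F = T_a F + Σ rem • mon_b`). -/
lemma tfield_shift (n p : ℕ) (F : (Fin n → ℕ) → (Fin n → ℝ) → ℝ) (a b : Fin n → ℝ) :
    tfield n p F b = tfield n p F a + ∑ α ∈ degSet n p, rem n p F a b α • mon n p b α := by
  apply Subtype.ext
  funext x
  have hsum : ((∑ α ∈ degSet n p, rem n p F a b α • mon n p b α : Pp n p) :
      (Fin n → ℝ) → ℝ) x = ∑ α ∈ degSet n p, rem n p F a b α * monF n b α x := by
    rw [AddSubmonoidClass.coe_finset_sum, Finset.sum_apply]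
    refine Finset.sum_congr rfl fun α hα => ?_
    rw [SetLike.val_smul, Pi.smul_apply, smul_eq_mul, mon_coe b (mem_degSet.1 hα)]
  show (tfield n p F b : (Fin n → ℝ) → ℝ) x = ((tfield n p F a : (Fin n → ℝ) → ℝ) +
    ((∑ α ∈ degSet n p, rem n p F a b α • mon n p b α : Pp n p) : (Fin n → ℝ) → ℝ)) x
  rw [Pi.add_apply, hsum, tfield_coe, tfield_coe, taylor_expand n p F a b x]
  rw [← Finset.sum_add_distrib]
  refine Finset.sum_congr rfl fun α hα => ?_
  rw [rem]
  ring

lemma rem_self (n p : ℕ) (F : (Fin n → ℕ) → (Fin n → ℝ) → ℝ) (a : Fin n → ℝ)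
    (α : Fin n → ℕ) : rem n p F a a α = 0 := by
  rw [rem]
  have h0 : (0 : Fin n → ℕ) ∈ degSet n (p - ∑ i, α i) := by
    rw [mem_degSet]; simp
  rw [Finset.sum_eq_single (0 : Fin n → ℕ)]
  · simp
  · intro β hβ hβ0
    have : ∃ i, β i ≠ 0 := by
      by_contra h
      push_neg at h
      exact hβ0 (funext fun i => h i)
    obtain ⟨i, hi⟩ := this
    have : ∏ j, (a j - a j) ^ β j = 0 := by
      apply Finset.prod_eq_zero (Finset.mem_univ i)
      simp [zero_pow hi]
    rw [this]
    simp
  · intro h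
    exact absurd h0 h

/-- Continuity of the field components along sequences in `X`. -/
lemma F_tendsto {n p : ℕ} {F : (Fin n → ℕ) → (Fin n → ℝ) → ℝ} {X : Set (Fin n → ℝ)}
    (hF : IsWhitneyField n p F X) {α : Fin n → ℕ} (hα : ∑ i, α i ≤ p)
    {u : ℕ → Fin n → ℝ} (hu : ∀ j, u j ∈ X) {a : Fin n → ℝ} (ha : a ∈ X)
    (hconv : Filter.Tendsto u Filter.atTop (nhds a)) :
    Filter.Tendsto (fun j => F α (u j)) Filter.atTop (nhds (F α a)) := by
  set G : (Fin n → ℝ) → ℝ := fun b => ∑ β ∈ degSet n (p - ∑ i, α i),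
    F (α + β) a * (∏ i, (b i - a i) ^ β i) / (∏ i, ((β i).factorial : ℝ)) with hG
  have hGa : G a = F α a := by
    have := rem_self n p F a α
    rw [rem] at this
    rw [hG]
    linarith
  have hGc : Continuous G := by
    apply continuous_finset_sum
    intro β _
    apply Continuous.div_const
    apply Continuous.mul continuous_const
    apply continuous_finset_prod
    intro i _
    exact ((continuous_apply i).sub continuous_const).pow _
  have hrem : Filter.Tendsto (fun j => rem n p F a (u j) α) Filter.atTop (nhds 0) := by
    rw [NormedAddCommGroup.tendsto_nhds_zero]
    intro ε hε
    obtain ⟨δ, hδ, hδ'⟩ := hF α hα (ε/2) (by linarith)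
    have h1 : ∀ᶠ j in Filter.atTop, ‖u j - a‖ < min δ 1 := by
      have : Filter.Tendsto (fun j => u j - a) Filter.atTop (nhds (a - a)) :=
        hconv.sub tendsto_const_nhds
      rw [sub_self] at this
      exact (NormedAddCommGroup.tendsto_nhds_zero.1 this) _ (lt_min hδ one_pos)
    filter_upwards [h1] with j hj
    rcases eq_or_ne a (u j) with h | h
    · rw [← h, rem_self]
      simpa using hε
    · have hb := hδ' a ha (u j) (hu j) h (lt_of_lt_of_le hj (min_le_left _ _))
      have hle1 : ‖u j - a‖ ^ (p - ∑ i, α i) ≤ 1 := by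
        apply pow_le_one₀ (norm_nonneg _)
        exact le_of_lt (lt_of_lt_of_le hj (min_le_right _ _))
      calc ‖rem n p F a (u j) α‖ = |rem n p F a (u j) α| := rfl
        _ ≤ ε/2 * ‖u j - a‖ ^ (p - ∑ i, α i) := hb
        _ ≤ ε/2 * 1 := by
            apply mul_le_mul_of_nonneg_left hle1 (by linarith)
        _ < ε := by linarith
  have hGt : Filter.Tendsto (fun j => G (u j)) Filter.atTop (nhds (F α a)) := by
    rw [← hGa]
    exact (hGc.tendsto a).comp hconv
  have : ∀ j, F α (u j) = rem n p F a (u j) α + G (u j) := by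
    intro j
    rw [rem, hG]
    ring
  simp only [this]
  simpa using hrem.add hGt

/-- Convergence of Taylor fields in `P_p`. -/
lemma tfield_tendsto {n p : ℕ} {F : (Fin n → ℕ) → (Fin n → ℝ) → ℝ} {X : Set (Fin n → ℝ)}
    (hF : IsWhitneyField n p F X)
    {u : ℕ → Fin n → ℝ} (hu : ∀ j, u j ∈ X) {a : Fin n → ℝ} (ha : a ∈ X)
    (hconv : Filter.Tendsto u Filter.atTop (nhds a)) :
    Filter.Tendsto (fun j => tfield n p F (u j)) Filter.atTop (nhds (tfield n p F a)) := by
  rw [Topology.IsEmbedding.subtypeVal.tendsto_nhds_iff]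
  rw [tendsto_pi_nhds]
  intro x
  simp only [Function.comp_def, tfield_coe]
  apply tendsto_finset_sum
  intro α hα
  apply Filter.Tendsto.mul (F_tendsto hF (mem_degSet.1 hα) hu ha hconv)
  have hcont : Continuous fun b : Fin n → ℝ => monF n b α x := by
    unfold monF
    apply Continuous.mul continuous_const
    apply continuous_finset_prod
    intro i _
    exact (continuous_const.sub (continuous_apply i)).pow _
  exact (hcont.tendsto a).comp hconv

/-- Joint sequential continuity of evaluation, `S_j(Q_j) → ξ(Q)` (finite dimension). -/
lemma weakdual_eval_tendsto {n p : ℕ} {S : ℕ → PpD n p} {ξ : PpD n p}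
    (hS : Filter.Tendsto S Filter.atTop (nhds ξ)) {Q : ℕ → Pp n p} {L : Pp n p}
    (hQ : Filter.Tendsto Q Filter.atTop (nhds L)) :
    Filter.Tendsto (fun j => S j (Q j)) Filter.atTop (nhds (ξ L)) := by
  classical
  set B := Module.finBasis ℝ (Pp n p)
  have hcoord : ∀ k, Continuous fun v : Pp n p => B.repr v k := by
    intro k
    exact LinearMap.continuous_of_finiteDimensional
      ((Finsupp.lapply k : (Fin (Module.finrank ℝ (Pp n p)) →₀ ℝ) →ₗ[ℝ] ℝ).comp
        B.repr.toLinearMap)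
  have heval : ∀ w : Pp n p,
      Filter.Tendsto (fun j => S j w) Filter.atTop (nhds (ξ w)) := by
    intro w
    exact tendsto_iff_forall_eval_tendsto_topDualPairing.1 hS w
  have hrepr : ∀ (η : PpD n p) (v : Pp n p), η v = ∑ k, B.repr v k * η (B k) := by
    intro η v
    conv_lhs => rw [← B.sum_repr v]
    rw [map_sum]
    refine Finset.sum_congr rfl fun k _ => ?_
    rw [map_smul, smul_eq_mul]
  rw [show (fun j => S j (Q j)) = fun j => ∑ k, B.repr (Q j) k * S j (B k) from
    funext fun j => hrepr _ _, hrepr ξ L]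
  apply tendsto_finset_sum
  intro k _
  exact (((hcoord k).tendsto L).comp hQ).mul (heval (B k))

end Aux

/-- Lemma 4.8 (case k = 1). -/
theorem whitney_field_functional_limit (n p : ℕ) (U X : Set (Fin n → ℝ)) (hU : IsOpen U)
    (hXU : X ⊆ U) (hXcl : closure X ∩ U ⊆ X)
    (a0 a1 : ℕ → Fin n → ℝ) (ha0X : ∀ j, a0 j ∈ X) (ha1X : ∀ j, a1 j ∈ X)
    (a : Fin n → ℝ) (haX : a ∈ X)
    (ha0 : Filter.Tendsto a0 Filter.atTop (nhds a))
    (ha1 : Filter.Tendsto a1 Filter.atTop (nhds a))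
    (ξ0 ξ1 : ℕ → PpD n p) (ξ : PpD n p)
    (hξ : Filter.Tendsto (fun j => ξ0 j + ξ1 j) Filter.atTop (nhds ξ))
    (c : ℝ)
    (hc0 : ∀ j, ∀ α : Fin n → ℕ, ∑ i, α i ≤ p →
      ‖a0 j - a0 j‖ ^ (p - ∑ i, α i) * |ξ0 j (mon n p (a0 j) α)| ≤ c)
    (hc1 : ∀ j, ∀ α : Fin n → ℕ, ∑ i, α i ≤ p →
      ‖a1 j - a0 j‖ ^ (p - ∑ i, α i) * |ξ1 j (mon n p (a1 j) α)| ≤ c)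
    (F : (Fin n → ℕ) → (Fin n → ℝ) → ℝ) (hF : IsWhitneyField n p F X) :
    Filter.Tendsto (fun j => ξ0 j (tfield n p F (a0 j)) + ξ1 j (tfield n p F (a1 j)))
      Filter.atTop (nhds (ξ (tfield n p F a))) := by
  have hc : 0 ≤ c := le_trans (mul_nonneg (pow_nonneg (norm_nonneg _) _) (abs_nonneg _))
    (hc0 0 0 (by simp))
  -- rewrite the sequence
  have key : ∀ j, ξ0 j (tfield n p F (a0 j)) + ξ1 j (tfield n p F (a1 j)) =
      (ξ0 j + ξ1 j) (tfield n p F (a0 j)) +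
        ∑ α ∈ degSet n p, rem n p F (a0 j) (a1 j) α * ξ1 j (mon n p (a1 j) α) := by
    intro j
    have hadd : ∀ (f g : PpD n p) (Q : Pp n p), (f + g) Q = f Q + g Q := fun _ _ _ => rfl
    rw [tfield_shift n p F (a0 j) (a1 j), map_add, map_sum]
    simp only [map_smul, smul_eq_mul, hadd]
    ring
  simp only [key]
  have h1 : Filter.Tendsto (fun j => (ξ0 j + ξ1 j) (tfield n p F (a0 j)))
      Filter.atTop (nhds (ξ (tfield n p F a))) :=
    weakdual_eval_tendsto hξ (tfield_tendsto hF ha0X haX ha0)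
  have h2 : Filter.Tendsto
      (fun j => ∑ α ∈ degSet n p, rem n p F (a0 j) (a1 j) α * ξ1 j (mon n p (a1 j) α))
      Filter.atTop (nhds 0) := by
    rw [NormedAddCommGroup.tendsto_nhds_zero]
    intro ε hε
    set N : ℝ := ((degSet n p).card : ℝ)
    have hN : 0 ≤ N := Nat.cast_nonneg _
    set ε₀ : ℝ := ε / ((N + 1) * (c + 1)) with hε₀def
    have hε₀ : 0 < ε₀ := by
      apply div_pos hε
      apply mul_pos <;> linarith
    have hdiff : Filter.Tendsto (fun j => a1 j - a0 j) Filter.atTop (nhds 0) := by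
      simpa using ha1.sub ha0
    have hterm : ∀ α ∈ degSet n p, ∀ᶠ j in Filter.atTop,
        |rem n p F (a0 j) (a1 j) α * ξ1 j (mon n p (a1 j) α)| ≤ ε₀ * c := by
      intro α hα
      rw [mem_degSet] at hα
      obtain ⟨δ, hδ, hδ'⟩ := hF α hα ε₀ hε₀
      have h1' : ∀ᶠ j in Filter.atTop, ‖a1 j - a0 j‖ < δ :=
        (NormedAddCommGroup.tendsto_nhds_zero.1 hdiff) δ hδ
      filter_upwards [h1'] with j hj
      rcases eq_or_ne (a0 j) (a1 j) with h | h
      · rw [← h, rem_self]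
        simp only [zero_mul, abs_zero]
        exact mul_nonneg (le_of_lt hε₀) hc
      · have hb := hδ' (a0 j) (ha0X j) (a1 j) (ha1X j) h hj
        rw [abs_mul]
        calc |rem n p F (a0 j) (a1 j) α| * |ξ1 j (mon n p (a1 j) α)|
            ≤ (ε₀ * ‖a1 j - a0 j‖ ^ (p - ∑ i, α i)) * |ξ1 j (mon n p (a1 j) α)| :=
              mul_le_mul_of_nonneg_right hb (abs_nonneg _)
          _ = ε₀ * (‖a1 j - a0 j‖ ^ (p - ∑ i, α i) * |ξ1 j (mon n p (a1 j) α)|) := by ring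
          _ ≤ ε₀ * c := mul_le_mul_of_nonneg_left (hc1 j α hα) (le_of_lt hε₀)
    rw [← Filter.eventually_all_finset] at hterm
    filter_upwards [hterm] with j hj
    calc ‖∑ α ∈ degSet n p, rem n p F (a0 j) (a1 j) α * ξ1 j (mon n p (a1 j) α)‖
        ≤ ∑ α ∈ degSet n p, |rem n p F (a0 j) (a1 j) α * ξ1 j (mon n p (a1 j) α)| :=
          Finset.abs_sum_le_sum_abs _ _
      _ ≤ ∑ _α ∈ degSet n p, ε₀ * c := Finset.sum_le_sum hj
      _ = N * (ε₀ * c) := by rw [Finset.sum_const, nsmul_eq_mul]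
      _ < ε := by
          rw [hε₀def]
          have heq : N * (ε / ((N + 1) * (c + 1)) * c) = ε * (N * c) / ((N + 1) * (c + 1)) := by
            ring
          rw [heq, div_lt_iff₀ (by positivity)]
          nlinarith [mul_le_mul_of_nonneg_left (mul_nonneg hN hc) hε.le]
  simpa using h1.add h2
end

section
/- Let X ⊂ ℝ be the set {0} ∪ {x_j : j ≥ 1} where (x_j, y_j) is defined by (x₁,y₁) = (1,1) and, inductively, (x_{j+1}, y_{j+1}) is the intersection of the line through (x_j, y_j) of slope 2 (if j odd) or −2 (if j even) with the arc y = −x² , x > 0 (if j odd) or y = x², x > 0 (if j even). Define F⁰(0) = 0, F⁰(x_j) = y_j, and F¹ ≡ 0 on X. Then lim_{j→∞} F⁰(x_j)/x_j = 0, but F⁰(x_j)/|x_j − x_{j+1}| does not tend to 0 as j → ∞; in particular F = (F⁰, F¹) is not a C¹ Whitney field on X. -/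
open Filter Topology

/-- The example of Final Remarks 5.5(2): the sequence `(x_j, y_j)` starts at `(1,1)`
and alternately follows lines of slope `2` (to the arc `y = -x²`, `x > 0`) and
slope `-2` (to the arc `y = x²`, `x > 0`).  With `F⁰(0) = 0`, `F⁰(x_j) = y_j`,
`F¹ ≡ 0` on `X = {0} ∪ {x_j}`, one has `y_j / x_j → 0` but `y_j / |x_j - x_{j+1}|`
does not tend to `0`; in particular `(F⁰, F¹)` is not a `C¹` Whitney field on `X`. -/
theorem not_whitney_field_example (x y : ℕ → ℝ)
    (hx1 : x 0 = 1) (hy1 : y 0 = 1) (hxpos : ∀ j, 0 < x j)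
    (hrec : ∀ j : ℕ,
      (Even j → y (j + 1) = -(x (j + 1)) ^ 2 ∧
        y (j + 1) - y j = 2 * (x (j + 1) - x j)) ∧
      (¬ Even j → y (j + 1) = (x (j + 1)) ^ 2 ∧
        y (j + 1) - y j = -2 * (x (j + 1) - x j))) :
    Tendsto (fun j => y j / x j) atTop (nhds 0) ∧
    ¬ Tendsto (fun j => y j / |x j - x (j + 1)|) atTop (nhds 0) ∧
    ∀ F0 F1 : ℝ → ℝ, F0 0 = 0 → (∀ j, F0 (x j) = y j) →
      (∀ t ∈ insert (0 : ℝ) (Set.range x), F1 t = 0) →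
      ¬ (∀ ε > (0 : ℝ), ∃ δ > (0 : ℝ),
        ∀ a ∈ insert (0 : ℝ) (Set.range x), ∀ b ∈ insert (0 : ℝ) (Set.range x),
          a ≠ b → |a - b| < δ →
            |F0 b - F0 a - F1 a * (b - a)| ≤ ε * |b - a|) := by
  -- Sign structure: y j = x j ^ 2 for even j, y j = -(x j ^ 2) for odd j.
  have heven : ∀ j, Even j → y j = x j ^ 2 := by
    intro j hj
    match j with
    | 0 => rw [hx1, hy1]; norm_num
    | k + 1 =>
      have hk : ¬ Even k := Nat.even_add_one.mp hj
      exact ((hrec k).2 hk).1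
  have hodd : ∀ j, ¬ Even j → y j = -(x j ^ 2) := by
    intro j hj
    match j with
    | 0 => exact absurd Even.zero hj
    | k + 1 =>
      have hk : Even k := not_not.mp (fun h => hj (Nat.even_add_one.mpr h))
      exact ((hrec k).1 hk).1
  have habs : ∀ j, |y j| = x j ^ 2 := by
    intro j
    by_cases hj : Even j
    · rw [heven j hj]; exact abs_of_nonneg (sq_nonneg _)
    · rw [hodd j hj, abs_neg]; exact abs_of_nonneg (sq_nonneg _)
  -- The key recursion.
  have hrel : ∀ j, x (j + 1) ^ 2 + x j ^ 2 = 2 * (x j - x (j + 1)) := by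
    intro j
    by_cases hj : Even j
    · obtain ⟨h1, h2⟩ := (hrec j).1 hj
      have h3 := heven j hj
      rw [h1, h3] at h2
      linarith
    · obtain ⟨h1, h2⟩ := (hrec j).2 hj
      have h3 := hodd j hj
      rw [h1, h3] at h2
      linarith
  have hanti : ∀ j, x (j + 1) < x j := by
    intro j
    nlinarith [hrel j, hxpos j, hxpos (j + 1), sq_nonneg (x (j + 1)), sq_nonneg (x j),
      mul_pos (hxpos j) (hxpos j)]
  have hAnti : Antitone x := (strictAnti_nat_of_succ_lt hanti).antitone
  have hbdd : BddBelow (Set.range x) := ⟨0, by rintro _ ⟨n, rfl⟩; exact (hxpos n).le⟩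
  set L := ⨅ n, x n with hLdef
  have h1 : Tendsto x atTop (nhds L) := tendsto_atTop_ciInf hAnti hbdd
  have hshift : Tendsto (fun j => x (j + 1)) atTop (nhds L) :=
    h1.comp (tendsto_add_atTop_nat 1)
  have hsum : Tendsto (fun j => x (j + 1) ^ 2 + x j ^ 2) atTop (nhds (L ^ 2 + L ^ 2)) :=
    (hshift.pow 2).add (h1.pow 2)
  have hzero : Tendsto (fun j => 2 * (x j - x (j + 1))) atTop (nhds (2 * (L - L))) :=
    (h1.sub hshift).const_mul 2
  have hLL : L ^ 2 + L ^ 2 = 2 * (L - L) :=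
    tendsto_nhds_unique (hsum.congr (fun j => hrel j)) hzero
  have hL0 : L = 0 := by
    have h2 : L ^ 2 = 0 := by linarith
    exact pow_eq_zero_iff two_ne_zero |>.mp h2
  have hx0 : Tendsto x atTop (nhds 0) := hL0 ▸ h1
  -- the lower bound x j - x (j+1) ≤ x j ^ 2
  have hle : ∀ j, x j - x (j + 1) ≤ x j ^ 2 := by
    intro j
    nlinarith [hrel j, mul_pos (sub_pos.mpr (hanti j))
      (add_pos (hxpos j) (hxpos (j + 1)))]
  refine ⟨?_, ?_, ?_⟩
  · -- y j / x j → 0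
    apply squeeze_zero_norm (fun j => ?_) hx0
    rw [Real.norm_eq_abs, abs_div, habs j, abs_of_pos (hxpos j), sq, mul_div_assoc,
      div_self (hxpos j).ne', mul_one]
  · -- y j / |x j - x (j+1)| does not tend to 0
    intro h
    have hge : ∀ j, (1 : ℝ) ≤ abs (y j / |x j - x (j + 1)|) := by
      intro j
      have hd : 0 < x j - x (j + 1) := sub_pos.mpr (hanti j)
      rw [abs_div, abs_abs, habs j, abs_of_pos hd]
      exact (one_le_div hd).mpr (hle j)
    obtain ⟨j, hj⟩ := (Metric.tendsto_nhds.mp h 1 one_pos).exists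
    rw [Real.dist_eq, sub_zero] at hj
    exact absurd hj (not_lt.mpr (hge j))
  · -- not a Whitney field
    intro F0 F1 hF00 hF0x hF10 hW
    obtain ⟨δ, hδ, hprop⟩ := hW 1 one_pos
    obtain ⟨j, hj⟩ := (Metric.tendsto_nhds.mp hx0 δ hδ).exists
    rw [Real.dist_eq, sub_zero, abs_of_pos (hxpos j)] at hj
    have hxle1 : x j ≤ 1 := hx1 ▸ hAnti (Nat.zero_le j)
    have hdj : |x j - x (j + 1)| < δ := by
      rw [abs_of_pos (sub_pos.mpr (hanti j))]
      nlinarith [hle j, hxpos j]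
    have hmem : ∀ k, x k ∈ insert (0 : ℝ) (Set.range x) :=
      fun k => Set.mem_insert_iff.mpr (Or.inr ⟨k, rfl⟩)
    have hneq : x j ≠ x (j + 1) := (hanti j).ne'
    have key := hprop (x j) (hmem j) (x (j + 1)) (hmem (j + 1)) hneq hdj
    rw [hF0x, hF0x, hF10 (x j) (hmem j), zero_mul, sub_zero, one_mul] at key
    have habs2 : |y (j + 1) - y j| = 2 * |x (j + 1) - x j| := by
      by_cases hj' : Even j
      · rw [((hrec j).1 hj').2, abs_mul]; norm_num
      · rw [((hrec j).2 hj').2, abs_mul]; norm_num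
    have hdpos : 0 < |x (j + 1) - x j| := abs_pos.mpr (sub_ne_zero.mpr hneq.symm)
    rw [habs2] at key
    linarith
end
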